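/- Let (Q,ψ) be an extended graph query and H ←f− K −g→ H' a subgraph-restricted graph modification from host graph H with relevant subgraph H_p into the modified host graph H' with relevant subgraph H'_p. Then for every graph morphism m_K: Q→K, if either f∘m_K ⊨ ψ and g∘m_K ⊭ ψ, or f∘m_K ⊭ ψ and g∘m_K ⊨ ψ, then f∘m_K is subgraph satisfaction dependent (for (Q,ψ) with relevant subgraph H_p in H) or g∘m_K is subgraph satisfaction dependent (for (Q,ψ) with relevant subgraph H'_p in H'). -/

import Mathlib

/-! ## Graphs, subgraphs, morphisms and matches -/

/-- A graph: a set of vertices, a set of edges, and source/target functions. -/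
structure GraphT where
  V : Type
  E : Type
  src : E → V
  tgt : E → V

/-- A subgraph of a graph `H`: subsets of vertices and edges of `H`, closed
under the source and target functions of `H`. -/
structure Subgraph (H : GraphT) where
  verts : Set H.V
  edges : Set H.E
  src_mem : ∀ e ∈ edges, H.src e ∈ verts
  tgt_mem : ∀ e ∈ edges, H.tgt e ∈ verts

/-- A graph morphism from `Q` to `H`.  A *match* for a query graph `Q` into a
host graph `H` is a graph morphism `Q → H`; the type `GraphMor Q H` plays the
role of the set `M(Q,H)` of all matches from `Q` into `H`. -/
structure GraphMor (Q H : GraphT) where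
  onV : Q.V → H.V
  onE : Q.E → H.E
  src_comm : ∀ e, H.src (onE e) = onV (Q.src e)
  tgt_comm : ∀ e, H.tgt (onE e) = onV (Q.tgt e)

/-- Composition of graph morphisms. -/
def GraphMor.comp {A B C : GraphT} (g : GraphMor B C) (f : GraphMor A B) :
    GraphMor A C where
  onV v := g.onV (f.onV v)
  onE e := g.onE (f.onE e)
  src_comm e := by rw [g.src_comm, f.src_comm]
  tgt_comm e := by rw [g.tgt_comm, f.tgt_comm]

/-- A graph morphism is a monomorphism if it is injective on vertices and edges. -/
def GraphMor.Mono {Q H : GraphT} (m : GraphMor Q H) : Prop :=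
  Function.Injective m.onV ∧ Function.Injective m.onE

/-- Cast a match along an equality of query graphs. -/
def GraphMor.castQ {Q Q' H : GraphT} (h : Q = Q') (m : GraphMor Q H) :
    GraphMor Q' H := h ▸ m

/-- The image of a match `m` intersects the subgraph `Hp`, i.e.
`m(Q) ∩ H_p ≠ ∅`. -/
def GraphMor.Touches {Q H : GraphT} (m : GraphMor Q H) (Hp : Subgraph H) : Prop :=
  (∃ v, m.onV v ∈ Hp.verts) ∨ (∃ e, m.onE e ∈ Hp.edges)

/-- Completeness of a set of matches under a subgraph: every match from `Q`
into `H` whose image intersects `Hp` belongs to the set. -/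
def CompleteUnder {Q H : GraphT} (M : Set (GraphMor Q H)) (Hp : Subgraph H) : Prop :=
  ∀ m : GraphMor Q H, m.Touches Hp → m ∈ M

/-- The size `|m| = |V^Q| + |E^Q|` of a match `m : Q → H`. -/
noncomputable def matchSize {Q H : GraphT} (_ : GraphMor Q H) : ℕ :=
  Nat.card Q.V + Nat.card Q.E

/-! ## RETE nets (abstract) -/

/-- A (standard) RETE net: a collection of RETE nodes with a designated
production node, where each node `n` is associated with a query subgraph
`query n` and with a target result set, computed from the host graph and the
current result sets of the other nodes (its dependencies). -/
structure ReteNet where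
  Node : Type
  prod : Node
  query : Node → GraphT
  target : (H : GraphT) →
    ((n : Node) → Set (GraphMor (query n) H)) →
    (n : Node) → Set (GraphMor (query n) H)

/-- A configuration of a RETE net: a current result set for every node. -/
def ReteConfig (N : ReteNet) (H : GraphT) : Type :=
  (n : N.Node) → Set (GraphMor (N.query n) H)

/-- Consistency of a configuration of a standard RETE net for a host graph:
every node's current result set equals its target result set. -/
def ReteConsistent {H : GraphT} (N : ReteNet) (C : ReteConfig N H) : Prop :=
  ∀ n, C n = N.target H C n

/-- The effective size `|C|_e` of a configuration of a standard RETE net. -/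
noncomputable def effSize {H : GraphT} {N : ReteNet} (C : ReteConfig N H) : ℕ :=
  ∑ᶠ n : N.Node, ∑ᶠ m ∈ C n, matchSize m

/-! ## Marking-sensitive RETE nets (abstract) -/

/-- A marking-sensitive RETE net: as a RETE net, but intermediate results are
pairs `(m, φ)` of a match and a marking `φ ∈ ℕ ∪ {∞}` (represented by `ℕ∞`,
with `⊤` playing the role of `∞`), and target result sets additionally depend
on the relevant subgraph `Hp ⊆ H`. -/
structure MSReteNet where
  Node : Type
  prod : Node
  query : Node → GraphT
  target : (H : GraphT) → Subgraph H →
    ((n : Node) → Set (GraphMor (query n) H × ℕ∞)) →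
    (n : Node) → Set (GraphMor (query n) H × ℕ∞)

/-- A configuration of a marking-sensitive RETE net. -/
def MSConfig (N : MSReteNet) (H : GraphT) : Type :=
  (n : N.Node) → Set (GraphMor (N.query n) H × ℕ∞)

/-- Consistency of a configuration of a marking-sensitive RETE net for a host
graph `H` with relevant subgraph `Hp ⊆ H`. -/
def MSConsistent {H : GraphT} (N : MSReteNet) (Hp : Subgraph H)
    (C : MSConfig N H) : Prop :=
  ∀ n, C n = N.target H Hp C n

/-- The stripped result set of a node of a marking-sensitive RETE net. -/
def strippedResult {H : GraphT} (N : MSReteNet) (C : MSConfig N H) (n : N.Node) :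
    Set (GraphMor (N.query n) H) :=
  {m | ∃ φ, (m, φ) ∈ C n}

/-- The stripped result set of the production node, viewed as a set of matches
from the query graph `Q` into `H` (along an equality of query graphs). -/
def strippedProdAs {H : GraphT} (N : MSReteNet) (C : MSConfig N H) {Q : GraphT}
    (h : N.query N.prod = Q) : Set (GraphMor Q H) :=
  (fun m => m.castQ h) '' strippedResult N C N.prod

/-- Total size of all matches stored in a configuration of a marking-sensitive
RETE net: `Σ_{n} Σ_{(m,φ) ∈ C(n)} |m|`. -/
noncomputable def msTotalSize {H : GraphT} {N : MSReteNet} (C : MSConfig N H) : ℕ :=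
  ∑ᶠ n : N.Node, ∑ᶠ p ∈ C n, matchSize p.1

/-- Executing a single RETE node replaces its current result set by its target
result set; executing a sequence of nodes executes them in order. -/
noncomputable def executeSeq {H : GraphT} (N : MSReteNet) (Hp : Subgraph H) :
    List N.Node → MSConfig N H → MSConfig N H
  | [], C => C
  | n :: O, C =>
      executeSeq N Hp O
        (@Function.update N.Node (fun n' => Set (GraphMor (N.query n') H × ℕ∞))
          (Classical.decEq _) C n (N.target H Hp C n))

/-! ## Typed graphs and edge domination -/

/-- A typed graph: a graph together with a typing morphism into a type graph. -/
structure TypedGraph where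
  TG : GraphT
  G : GraphT
  typ : GraphMor G TG

/-- A typed graph is edge-dominated if for every edge type, the number of its
edge instances is at least the number of vertex instances of its source type
and of its target type. -/
def TypedGraph.EdgeDominated (T : TypedGraph) : Prop :=
  ∀ eT : T.TG.E,
    max {v : T.G.V | T.typ.onV v = T.TG.src eT}.ncard
        {v : T.G.V | T.typ.onV v = T.TG.tgt eT}.ncard
      ≤ {e : T.G.E | T.typ.onE e = eT}.ncard

/-! ## Nested graph conditions -/

/-- A partial graph monomorphism from (a subgraph of) `Q` into `Q'`: a domain
subgraph of `Q` together with functions that behave as an injective graph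
morphism on the domain. -/
structure PartialMor (Q Q' : GraphT) where
  domV : Set Q.V
  domE : Set Q.E
  src_mem : ∀ e ∈ domE, Q.src e ∈ domV
  tgt_mem : ∀ e ∈ domE, Q.tgt e ∈ domV
  onV : Q.V → Q'.V
  onE : Q.E → Q'.E
  src_comm : ∀ e ∈ domE, Q'.src (onE e) = onV (Q.src e)
  tgt_comm : ∀ e ∈ domE, Q'.tgt (onE e) = onV (Q.tgt e)
  injV : Set.InjOn onV domV
  injE : Set.InjOn onE domE

/-- `m` restricted to the domain of `a` equals `m' ∘ a`. -/
def AgreeOn {Q Q' H : GraphT} (a : PartialMor Q Q') (m : GraphMor Q H)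
    (m' : GraphMor Q' H) : Prop :=
  (∀ v ∈ a.domV, m.onV v = m'.onV (a.onV v)) ∧
  (∀ e ∈ a.domE, m.onE e = m'.onE (a.onE e))

/-- Nested graph conditions over a query graph `Q`. -/
inductive NGC : GraphT → Type 1 where
  | tru {Q : GraphT} : NGC Q
  | neg {Q : GraphT} (ψ : NGC Q) : NGC Q
  | conj {Q : GraphT} (ψ₁ ψ₂ : NGC Q) : NGC Q
  | ex {Q : GraphT} (Q' : GraphT) (a : PartialMor Q Q') (ψ' : NGC Q') : NGC Q

/-- Satisfaction of a nested graph condition by a match `m : Q → H`. -/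
def NGC.Sat {H : GraphT} : {Q : GraphT} → NGC Q → GraphMor Q H → Prop
  | _, .tru, _ => True
  | _, .neg ψ, m => ¬ NGC.Sat ψ m
  | _, .conj ψ₁ ψ₂, m => NGC.Sat ψ₁ m ∧ NGC.Sat ψ₂ m
  | _, .ex _ a ψ', m => ∃ m', NGC.Sat ψ' m' ∧ AgreeOn a m m'

/-- Correctness of a set of matches for an extended graph query `(Q,ψ)` under
a subgraph `Hp ⊆ H`: all its matches satisfy `ψ`, and it contains every match
that satisfies `ψ` and touches `Hp`. -/
def CorrectUnder {Q H : GraphT} (ψ : NGC Q) (M : Set (GraphMor Q H))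
    (Hp : Subgraph H) : Prop :=
  (∀ m ∈ M, NGC.Sat ψ m) ∧
  (∀ m : GraphMor Q H, NGC.Sat ψ m → m.Touches Hp → m ∈ M)

/-- Subgraph satisfaction dependence of a match for an extended graph query
`(Q,ψ)` with relevant subgraph `Hp ⊆ H`. -/
def NGC.SatDep {H : GraphT} (Hp : Subgraph H) :
    {Q : GraphT} → NGC Q → GraphMor Q H → Prop
  | _, .tru, _ => False
  | _, .neg ψ, m => NGC.SatDep Hp ψ m
  | _, .conj ψ₁ ψ₂, m => NGC.SatDep Hp ψ₁ m ∨ NGC.SatDep Hp ψ₂ m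
  | _, .ex _ a ψ', m =>
      ∃ m', AgreeOn a m m' ∧ (m'.Touches Hp ∨ NGC.SatDep Hp ψ' m')

/-! ## GraphT modifications -/

/-- A graph modification: a span of graph monomorphisms `H ← K → H'`. -/
structure ModSpan (H H' : GraphT) where
  K : GraphT
  f : GraphMor K H
  g : GraphMor K H'
  f_mono : f.Mono
  g_mono : g.Mono

/-- A graph modification is subgraph-restricted for the relevant subgraphs
`Hp ⊆ H` and `H'p ⊆ H'`: `g ∘ f⁻¹` restricted to `H_s` is an isomorphism onto
`H'_s` (where `H_s` consists of all edges of `H` outside `Hp` and all vertices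
except those of `Hp` not incident to an edge outside `Hp`, and `H'_s` is
defined analogously) equal to the inverse of `f ∘ g⁻¹` restricted to `H'_s`,
and the relevant subgraphs are mapped onto each other. -/
def ModSpan.RestrictedTo {H H' : GraphT} (M : ModSpan H H')
    (Hp : Subgraph H) (H'p : Subgraph H') : Prop :=
  (∀ v, (v ∉ Hp.verts ∨ ∃ e, e ∉ Hp.edges ∧ (H.src e = v ∨ H.tgt e = v)) →
    ∃ k, M.f.onV k = v) ∧
  (∀ e, e ∉ Hp.edges → ∃ k, M.f.onE k = e) ∧
  (∀ v, (v ∉ H'p.verts ∨ ∃ e, e ∉ H'p.edges ∧ (H'.src e = v ∨ H'.tgt e = v)) →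
    ∃ k, M.g.onV k = v) ∧
  (∀ e, e ∉ H'p.edges → ∃ k, M.g.onE k = e) ∧
  (∀ k, (M.f.onV k ∉ Hp.verts ∨ ∃ e, e ∉ Hp.edges ∧
          (H.src e = M.f.onV k ∨ H.tgt e = M.f.onV k)) ↔
        (M.g.onV k ∉ H'p.verts ∨ ∃ e, e ∉ H'p.edges ∧
          (H'.src e = M.g.onV k ∨ H'.tgt e = M.g.onV k))) ∧
  (∀ k, M.f.onE k ∉ Hp.edges ↔ M.g.onE k ∉ H'p.edges) ∧
  (∀ k, M.f.onV k ∈ Hp.verts → M.g.onV k ∈ H'p.verts) ∧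
  (∀ k, M.f.onE k ∈ Hp.edges → M.g.onE k ∈ H'p.edges) ∧
  (∀ k, M.g.onV k ∈ H'p.verts → M.f.onV k ∈ Hp.verts) ∧
  (∀ k, M.g.onE k ∈ H'p.edges → M.f.onE k ∈ Hp.edges)

/-- `m = (f ∘ g⁻¹) ∘ m'` for a span `H ← K → H'`: both matches factor through
a common match into `K`. -/
def ModSpan.Corresponds {Q H H' : GraphT} (M : ModSpan H H')
    (m' : GraphMor Q H') (m : GraphMor Q H) : Prop :=
  ∃ mK : GraphMor Q M.K, M.g.comp mK = m' ∧ M.f.comp mK = m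

/-!
Induction on the condition. The only substantial case is `∃(a, ψ')`: a witness `m'` for
`f ∘ m_K` either touches `H_p`, making `f ∘ m_K` dependent, or avoids it; then `m'` lies in
the part of `H` preserved by the modification, so it lifts to `K` and is carried over to `H'`,
where it either witnesses the condition for `g ∘ m_K` or the induction hypothesis applies to
it. Negation swaps the roles of `H` and `H'`, so the claim is proved for both directions of the
span at once.
-/

@[ext]
lemma GraphMor.ext {Q H : GraphT} {m m' : GraphMor Q H}
    (hV : m.onV = m'.onV) (hE : m.onE = m'.onE) : m = m' := by
  cases m; cases m'; simp_all

def GraphMor.CoversOutside {K H : GraphT} (f : GraphMor K H) (Hp : Subgraph H) : Prop :=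
  (∀ v ∉ Hp.verts, ∃ k, f.onV k = v) ∧ (∀ e ∉ Hp.edges, ∃ k, f.onE k = e)

lemma ModSpan.RestrictedTo.f_coversOutside {H H' : GraphT} {M : ModSpan H H'}
    {Hp : Subgraph H} {H'p : Subgraph H'} (hres : M.RestrictedTo Hp H'p) :
    M.f.CoversOutside Hp :=
  ⟨fun v hv => hres.1 v (Or.inl hv), hres.2.1⟩

lemma ModSpan.RestrictedTo.g_coversOutside {H H' : GraphT} {M : ModSpan H H'}
    {Hp : Subgraph H} {H'p : Subgraph H'} (hres : M.RestrictedTo Hp H'p) :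
    M.g.CoversOutside H'p :=
  ⟨fun v hv => hres.2.2.1 v (Or.inl hv), hres.2.2.2.1⟩

lemma GraphMor.exists_comp_eq_of_not_touches {Q K H : GraphT} {f : GraphMor K H}
    {Hp : Subgraph H} (hf : Function.Injective f.onV) (hcov : f.CoversOutside Hp)
    (m : GraphMor Q H) (hm : ¬ m.Touches Hp) : ∃ m₀ : GraphMor Q K, f.comp m₀ = m := by
  simp only [GraphMor.Touches, not_or, not_exists] at hm
  choose kV hkV using fun v => hcov.1 (m.onV v) (hm.1 v)
  choose kE hkE using fun e => hcov.2 (m.onE e) (hm.2 e)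
  refine ⟨⟨kV, kE, fun e => hf ?_, fun e => hf ?_⟩, GraphMor.ext (funext hkV) (funext hkE)⟩
  · rw [← f.src_comm, hkE, hkV, m.src_comm]
  · rw [← f.tgt_comm, hkE, hkV, m.tgt_comm]

lemma AgreeOn.comp {Q Q' K H : GraphT} {a : PartialMor Q Q'} {m : GraphMor Q K}
    {m' : GraphMor Q' K} (h : AgreeOn a m m') (f : GraphMor K H) :
    AgreeOn a (f.comp m) (f.comp m') :=
  ⟨fun v hv => congrArg f.onV (h.1 v hv), fun e he => congrArg f.onE (h.2 e he)⟩

lemma AgreeOn.of_comp {Q Q' K H : GraphT} {a : PartialMor Q Q'} {m : GraphMor Q K}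
    {m' : GraphMor Q' K} {f : GraphMor K H} (hf : f.Mono)
    (h : AgreeOn a (f.comp m) (f.comp m')) : AgreeOn a m m' :=
  ⟨fun v hv => hf.1 (h.1 v hv), fun e he => hf.2 (h.2 e he)⟩

theorem NGC.satDep_of_sat_of_not_sat {K H H' : GraphT} {Q : GraphT} (ψ : NGC Q)
    {f : GraphMor K H} {g : GraphMor K H'} {Hp : Subgraph H} {H'p : Subgraph H'}
    (hf : f.Mono) (hg : g.Mono) (hfcov : f.CoversOutside Hp) (hgcov : g.CoversOutside H'p)
    (mK : GraphMor Q K) (hsat : NGC.Sat ψ (f.comp mK)) (hnsat : ¬ NGC.Sat ψ (g.comp mK)) :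
    NGC.SatDep Hp ψ (f.comp mK) ∨ NGC.SatDep H'p ψ (g.comp mK) := by
  induction ψ generalizing H H' with
  | tru => exact absurd trivial hnsat
  | neg ψ ih =>
    exact (ih hg hf hgcov hfcov mK (not_not.mp hnsat) hsat).symm
  | conj ψ₁ ψ₂ ih₁ ih₂ =>
    by_cases h₁ : NGC.Sat ψ₁ (g.comp mK)
    · have h₂ : ¬ NGC.Sat ψ₂ (g.comp mK) := fun h₂ => hnsat ⟨h₁, h₂⟩
      exact (ih₂ hf hg hfcov hgcov mK hsat.2 h₂).imp Or.inr Or.inr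
    · exact (ih₁ hf hg hfcov hgcov mK hsat.1 h₁).imp Or.inl Or.inl
  | ex Q' a ψ' ih =>
    obtain ⟨m', hsat', hagree⟩ := hsat
    by_cases htouch : m'.Touches Hp
    · exact Or.inl ⟨m', hagree, Or.inl htouch⟩
    obtain ⟨mK', rfl⟩ := GraphMor.exists_comp_eq_of_not_touches hf.1 hfcov m' htouch
    have hagreeG : AgreeOn a (g.comp mK) (g.comp mK') := (hagree.of_comp hf).comp g
    have hnsat' : ¬ NGC.Sat ψ' (g.comp mK') := fun h => hnsat ⟨_, h, hagreeG⟩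
    rcases ih hf hg hfcov hgcov mK' hsat' hnsat' with hdep | hdep
    · exact Or.inl ⟨_, hagree, Or.inr hdep⟩
    · exact Or.inr ⟨_, hagreeG, Or.inr hdep⟩

/-- Subgraph-restricted graph modifications can only change
NGC satisfaction for subgraph satisfaction dependent matches. -/
theorem subgraph_restricted_modification_satisfaction_change_dependent
    (H H' : GraphT) (M : ModSpan H H') (Hp : Subgraph H) (H'p : Subgraph H')
    (hres : M.RestrictedTo Hp H'p)
    (Q : GraphT) (ψ : NGC Q) (mK : GraphMor Q M.K)
    (h : (NGC.Sat ψ (M.f.comp mK) ∧ ¬ NGC.Sat ψ (M.g.comp mK)) ∨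
         (¬ NGC.Sat ψ (M.f.comp mK) ∧ NGC.Sat ψ (M.g.comp mK))) :
    NGC.SatDep Hp ψ (M.f.comp mK) ∨ NGC.SatDep H'p ψ (M.g.comp mK) := by
  have hfcov := hres.f_coversOutside
  have hgcov := hres.g_coversOutside
  rcases h with ⟨hsat, hnsat⟩ | ⟨hnsat, hsat⟩
  · exact ψ.satDep_of_sat_of_not_sat M.f_mono M.g_mono hfcov hgcov mK hsat hnsat
  · exact (ψ.satDep_of_sat_of_not_sat M.g_mono M.f_mono hgcov hfcov mK hsat hnsat).symm
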